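/- arXiv:2409.17260 — 6 statements merged into one kernel-verified Lean document; each statement's English description precedes it below -/
import Mathlib

section
/- If T is a bounded paranormal operator on a complex Hilbert space (i.e., ‖Tx‖² ≤ ‖T²x‖·‖x‖ for all x) and T is invertible, then T⁻¹ is paranormal. -/
theorem stmt_0 {H : Type*} [NormedAddCommGroup H] [InnerProductSpace ℂ H]
    [CompleteSpace H] (T S : H →L[ℂ] H)
    (hT : ∀ x : H, ‖T x‖ ^ 2 ≤ ‖(T ∘L T) x‖ * ‖x‖)
    (hTS : T ∘L S = 1) (hST : S ∘L T = 1) :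
    ∀ x : H, ‖S x‖ ^ 2 ≤ ‖(S ∘L S) x‖ * ‖x‖ := by
  intro y
  have h1 : ∀ z, T (S z) = z := fun z => by
    have := congrArg (fun f : H →L[ℂ] H => f z) hTS
    simpa using this
  have h := hT (S (S y))
  simp only [ContinuousLinearMap.comp_apply, h1] at h ⊢
  linarith [h]
end

section
/- If T is a bounded totally paranormal operator (T − λI is paranormal for every complex λ) and its spectrum is the singleton {μ}, then T = μI. -/
/-! With `S = T - μ • 1`, paranormality at `λ = μ` gives `‖S^(k+1)‖² ≤ ‖S^(k+2)‖ ‖S^k‖`, so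
`k ↦ ‖S^k‖` is log-convex and `‖S^n‖ = ‖S‖^n`. Gelfand's formula then identifies `‖S‖` with the
spectral radius of `S`, which is `0` because `σ(S) = {0}`. -/

open Filter

section LogConvex

variable {a : ℕ → ℝ}

-- `a (k + 1) / a k ≥ a 1 / a 0`, cleared of denominators.
lemma mul_le_mul_succ_of_sq_succ_le (ha : ∀ k, 0 ≤ a k)
    (hlog : ∀ k, a (k + 1) ^ 2 ≤ a (k + 2) * a k) (k : ℕ) :
    a 1 * a k ≤ a 0 * a (k + 1) := by
  induction k with
  | zero => rw [mul_comm]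
  | succ m ih =>
    rcases (ha m).eq_or_lt with hm | hm
    · have : a (m + 1) = 0 := by
        have := hlog m
        rw [← hm, mul_zero] at this
        exact pow_eq_zero_iff two_ne_zero |>.mp (le_antisymm this (sq_nonneg _))
      rw [this, mul_zero]
      exact mul_nonneg (ha 0) (ha _)
    · refine le_of_mul_le_mul_left ?_ hm
      calc a m * (a 1 * a (m + 1)) = a (m + 1) * (a 1 * a m) := by ring
        _ ≤ a (m + 1) * (a 0 * a (m + 1)) := mul_le_mul_of_nonneg_left ih (ha _)
        _ = a 0 * a (m + 1) ^ 2 := by ring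
        _ ≤ a 0 * (a (m + 2) * a m) := mul_le_mul_of_nonneg_left (hlog m) (ha 0)
        _ = a m * (a 0 * a (m + 1 + 1)) := by ring

lemma pow_mul_le_mul_pow_of_sq_succ_le (ha : ∀ k, 0 ≤ a k)
    (hlog : ∀ k, a (k + 1) ^ 2 ≤ a (k + 2) * a k) (n : ℕ) :
    a 1 ^ n * a 0 ≤ a n * a 0 ^ n := by
  induction n with
  | zero => simp
  | succ m ih =>
    calc a 1 ^ (m + 1) * a 0 = a 1 * (a 1 ^ m * a 0) := by ring
      _ ≤ a 1 * (a m * a 0 ^ m) := mul_le_mul_of_nonneg_left ih (ha 1)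
      _ = a 1 * a m * a 0 ^ m := by ring
      _ ≤ a 0 * a (m + 1) * a 0 ^ m :=
        mul_le_mul_of_nonneg_right (mul_le_mul_succ_of_sq_succ_le ha hlog m)
          (pow_nonneg (ha 0) m)
      _ = a (m + 1) * a 0 ^ (m + 1) := by ring

end LogConvex

theorem spectralRadius_eq_nnnorm_of_nnnorm_pow {A : Type*} [NormedRing A] [NormedAlgebra ℂ A]
    [CompleteSpace A] {a : A} (h : ∀ n, ‖a ^ n‖₊ = ‖a‖₊ ^ n) :
    spectralRadius ℂ a = ‖a‖₊ := by
  refine tendsto_nhds_unique (spectrum.pow_nnnorm_pow_one_div_tendsto_nhds_spectralRadius a)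
    (tendsto_const_nhds.congr' ?_)
  filter_upwards [eventually_ne_atTop 0] with n hn
  rw [h, ENNReal.coe_pow, ← ENNReal.rpow_natCast, ← ENNReal.rpow_mul,
    mul_one_div_cancel (Nat.cast_ne_zero.mpr hn), ENNReal.rpow_one]

def IsParanormal {𝕜 E : Type*} [NontriviallyNormedField 𝕜] [NormedAddCommGroup E]
    [NormedSpace 𝕜 E] (S : E →L[𝕜] E) : Prop :=
  ∀ x, ‖S x‖ ^ 2 ≤ ‖S (S x)‖ * ‖x‖

namespace IsParanormal

variable {𝕜 E : Type*} [NontriviallyNormedField 𝕜] [NormedAddCommGroup E] [NormedSpace 𝕜 E]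
  {S : E →L[𝕜] E}

lemma norm_pow_succ_sq_le (hS : IsParanormal S) (k : ℕ) :
    ‖S ^ (k + 1)‖ ^ 2 ≤ ‖S ^ (k + 2)‖ * ‖S ^ k‖ := by
  rw [← Real.sqrt_le_sqrt_iff (by positivity), Real.sqrt_sq (norm_nonneg _)]
  refine (S ^ (k + 1)).opNorm_le_bound (Real.sqrt_nonneg _) fun x => ?_
  rw [← Real.sqrt_sq (norm_nonneg x), ← Real.sqrt_mul (by positivity),
    Real.le_sqrt (norm_nonneg _) (by positivity)]
  calc ‖(S ^ (k + 1)) x‖ ^ 2 = ‖S ((S ^ k) x)‖ ^ 2 := by rw [pow_succ' S k]; rfl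
    _ ≤ ‖S (S ((S ^ k) x))‖ * ‖(S ^ k) x‖ := hS _
    _ = ‖(S ^ (k + 2)) x‖ * ‖(S ^ k) x‖ := by
      rw [pow_succ' S (k + 1), pow_succ' S k]; rfl
    _ ≤ ‖S ^ (k + 2)‖ * ‖x‖ * (‖S ^ k‖ * ‖x‖) :=
      mul_le_mul ((S ^ (k + 2)).le_opNorm x) ((S ^ k).le_opNorm x) (norm_nonneg _) (by positivity)
    _ = ‖S ^ (k + 2)‖ * ‖S ^ k‖ * ‖x‖ ^ 2 := by ring

lemma norm_pow [Nontrivial E] (hS : IsParanormal S) (n : ℕ) : ‖S ^ n‖ = ‖S‖ ^ n := by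
  refine le_antisymm (norm_pow_le S n) ?_
  simpa using
    pow_mul_le_mul_pow_of_sq_succ_le (a := fun k => ‖S ^ k‖) (fun _ => norm_nonneg _)
      hS.norm_pow_succ_sq_le n

end IsParanormal

lemma IsParanormal.spectralRadius_eq_nnnorm {E : Type*} [NormedAddCommGroup E] [NormedSpace ℂ E]
    [CompleteSpace E] [Nontrivial E] {S : E →L[ℂ] E} (hS : IsParanormal S) :
    spectralRadius ℂ S = ‖S‖₊ :=
  spectralRadius_eq_nnnorm_of_nnnorm_pow fun n => NNReal.eq (by simpa using hS.norm_pow n)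

theorem stmt_1 {H : Type*} [NormedAddCommGroup H] [InnerProductSpace ℂ H]
    [CompleteSpace H] (T : H →L[ℂ] H) (μ : ℂ)
    (hT : ∀ (lam : ℂ) (x : H),
      ‖(T - lam • 1) x‖ ^ 2 ≤ ‖((T - lam • 1) ∘L (T - lam • 1)) x‖ * ‖x‖)
    (hσ : spectrum ℂ T = {μ}) :
    T = μ • 1 := by
  nontriviality H
  have hS : IsParanormal (T - μ • 1) := hT μ
  rw [← sub_eq_zero, ← nnnorm_eq_zero, ← ENNReal.coe_eq_zero, ← hS.spectralRadius_eq_nnnorm]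
  have hspec : spectrum ℂ (T - μ • 1) = {0} := by
    rw [← Algebra.algebraMap_eq_smul_one, ← spectrum.sub_singleton_eq, hσ,
      Set.singleton_sub_singleton, sub_self]
  simp [spectralRadius, hspec]
end

section
/- If T is a bounded totally *-paranormal operator and λ ∈ ℂ, then every eigenvector of T for λ is also an eigenvector of T* for λ̄; that is, ker(T − λI) ⊆ ker(T* − λ̄I). -/
open ContinuousLinearMap

section

variable {𝕜 E : Type*} [RCLike 𝕜] [NormedAddCommGroup E] [InnerProductSpace 𝕜 E] [CompleteSpace E]

theorem ContinuousLinearMap.adjoint_sub_smul_one (A : E →L[𝕜] E) (c : 𝕜) :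
    adjoint (A - c • 1) = adjoint A - (starRingEnd 𝕜) c • 1 := by
  rw [map_sub, LinearIsometryEquiv.map_smulₛₗ, adjoint_one]

theorem ContinuousLinearMap.adjoint_apply_eq_zero_of_apply_eq_zero {A : E →L[𝕜] E} {x : E}
    (hA : ‖adjoint A x‖ ^ 2 ≤ ‖(A ∘L A) x‖ * ‖x‖) (hx : A x = 0) : adjoint A x = 0 := by
  rw [comp_apply, hx, map_zero, norm_zero, zero_mul] at hA
  exact norm_eq_zero.mp (pow_eq_zero_iff two_ne_zero |>.mp (le_antisymm hA (by positivity)))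

end

theorem stmt_3 {H : Type*} [NormedAddCommGroup H] [InnerProductSpace ℂ H]
    [CompleteSpace H] (T : H →L[ℂ] H)
    (hT : ∀ (lam : ℂ) (x : H),
      ‖(ContinuousLinearMap.adjoint (T - lam • 1)) x‖ ^ 2 ≤
        ‖((T - lam • 1) ∘L (T - lam • 1)) x‖ * ‖x‖)
    (lam : ℂ) :
    LinearMap.ker ((T - lam • (1 : H →L[ℂ] H) : H →L[ℂ] H) : H →ₗ[ℂ] H) ≤
      LinearMap.ker ((ContinuousLinearMap.adjoint T - (starRingEnd ℂ) lam • (1 : H →L[ℂ] H) : H →L[ℂ] H) : H →ₗ[ℂ] H) := by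
  intro x hx
  rw [LinearMap.mem_ker, coe_coe, ← adjoint_sub_smul_one]
  exact adjoint_apply_eq_zero_of_apply_eq_zero (hT lam x) hx
end

section
/- Let T be a bounded totally paranormal operator and let μ₁ ≠ μ₂ be nonzero eigenvalues of T with |μ₁| < |μ₂|. Then for every x ∈ ker(T − μ₁I) and y ∈ ker(T − μ₂I), ‖y‖ ≤ ‖x + y‖ (Birkhoff–James orthogonality of the eigenspaces). -/
/-! Apply paranormality of `S = T - μ₁` to `x + y`: since `S (x + y) = (μ₂ - μ₁) • y` and
`S² (x + y) = (μ₂ - μ₁)² • y`, the inequality `‖S z‖² ≤ ‖S² z‖ ‖z‖` becomes, after cancelling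
`‖μ₂ - μ₁‖²`, the inequality `‖y‖² ≤ ‖y‖ ‖x + y‖`. -/

namespace ContinuousLinearMap

variable {𝕜 E : Type*} [NormedField 𝕜] [NormedAddCommGroup E] [NormedSpace 𝕜 E]

def IsParanormal (S : E →L[𝕜] E) : Prop :=
  ∀ z, ‖S z‖ ^ 2 ≤ ‖S (S z)‖ * ‖z‖

theorem IsParanormal.norm_le_of_apply_eq_smul {S : E →L[𝕜] E} (hS : S.IsParanormal)
    {c : 𝕜} (hc : c ≠ 0) {y z : E} (hz : S z = c • y) (hy : S y = c • y) : ‖y‖ ≤ ‖z‖ := by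
  have hSSz : S (S z) = (c * c) • y := by rw [hz, map_smul, hy, smul_smul]
  have key : ‖c‖ ^ 2 * ‖y‖ ^ 2 ≤ ‖c‖ ^ 2 * (‖y‖ * ‖z‖) := by
    have := hS z
    rw [hSSz, hz, norm_smul, norm_smul, norm_mul] at this
    linarith
  have hyz : ‖y‖ ^ 2 ≤ ‖y‖ * ‖z‖ := le_of_mul_le_mul_left key (by positivity)
  rcases (norm_nonneg y).eq_or_lt with hy0 | hy0
  · rw [← hy0]; exact norm_nonneg z
  · exact le_of_mul_le_mul_left (by rwa [sq] at hyz) hy0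

theorem IsParanormal.norm_le_norm_add {S : E →L[𝕜] E} (hS : S.IsParanormal)
    {c : 𝕜} (hc : c ≠ 0) {x y : E} (hx : S x = 0) (hy : S y = c • y) : ‖y‖ ≤ ‖x + y‖ :=
  hS.norm_le_of_apply_eq_smul hc (by rw [map_add, hx, hy, zero_add]) hy

theorem apply_sub_smul_one_eq {T : E →L[𝕜] E} {μ ν : 𝕜} {v : E} (hv : T v = ν • v) :
    (T - μ • 1) v = (ν - μ) • v := by
  rw [sub_apply, smul_apply, one_apply_eq_self, hv, sub_smul]

end ContinuousLinearMap

open ContinuousLinearMap in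
theorem stmt_8_general {H : Type*} [NormedAddCommGroup H] [InnerProductSpace ℂ H]
    (T : H →L[ℂ] H)
    (hT : ∀ (lam : ℂ) (x : H),
      ‖(T - lam • 1) x‖ ^ 2 ≤ ‖((T - lam • 1) ∘L (T - lam • 1)) x‖ * ‖x‖)
    (μ₁ μ₂ : ℂ) (hne : μ₁ ≠ μ₂)
    (x y : H) (hx : T x = μ₁ • x) (hy : T y = μ₂ • y) :
    ‖y‖ ≤ ‖x + y‖ := by
  have hS : (T - μ₁ • 1).IsParanormal := hT μ₁
  refine hS.norm_le_norm_add (sub_ne_zero.mpr hne.symm) ?_ (apply_sub_smul_one_eq hy)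
  rw [apply_sub_smul_one_eq hx, sub_self, zero_smul]

theorem stmt_8 {H : Type*} [NormedAddCommGroup H] [InnerProductSpace ℂ H]
    [CompleteSpace H] (T : H →L[ℂ] H)
    (hT : ∀ (lam : ℂ) (x : H),
      ‖(T - lam • 1) x‖ ^ 2 ≤ ‖((T - lam • 1) ∘L (T - lam • 1)) x‖ * ‖x‖)
    (μ₁ μ₂ : ℂ) (h1 : μ₁ ≠ 0) (h2 : μ₂ ≠ 0) (hne : μ₁ ≠ μ₂)
    (habs : ‖μ₁‖ < ‖μ₂‖)
    (x y : H) (hx : T x = μ₁ • x) (hy : T y = μ₂ • y) :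
    ‖y‖ ≤ ‖x + y‖ :=
  stmt_8_general T hT μ₁ μ₂ hne x y hx hy
end

section
/- Let T be a bounded injective totally paranormal operator with ker(T*) = {0}. Then the minimum modulus m(T) = inf{‖Tx‖ : ‖x‖ = 1} equals the distance d(0, σ(T)) from 0 to the spectrum of T. -/
/-!
If `T` is not invertible then `0 ∈ σ(T)`, and `m(T) = 0`: otherwise `T` would be bounded below,
hence have closed range, which is also dense because `ker T* = 0`, so `T` would be invertible.
If `T` is invertible then `m(T) = 1 / ‖T⁻¹‖` and `d(0, σ(T)) = 1 / r(T⁻¹)`. The inverse of a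
paranormal operator is paranormal, and a paranormal operator `A` satisfies `‖Aⁿ‖ = ‖A‖ⁿ`
(induction on `‖Aⁿ⁺¹‖² ≤ ‖Aⁿ⁺²‖ ‖Aⁿ‖`), so Gelfand's formula gives `r(T⁻¹) = ‖T⁻¹‖`.
-/

open Filter ENNReal ContinuousLinearMap

section Units

variable {R M : Type*} [Semiring R] [TopologicalSpace M] [AddCommMonoid M] [Module R M]

@[simp]
theorem ContinuousLinearMap.units_apply_inv_apply (u : (M →L[R] M)ˣ) (x : M) :
    (u : M →L[R] M) ((↑u⁻¹ : M →L[R] M) x) = x := by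
  rw [← mul_apply_eq_comp, u.mul_inv, one_apply_eq_self]

@[simp]
theorem ContinuousLinearMap.units_inv_apply_apply (u : (M →L[R] M)ˣ) (x : M) :
    (↑u⁻¹ : M →L[R] M) ((u : M →L[R] M) x) = x := by
  rw [← mul_apply_eq_comp, u.inv_mul, one_apply_eq_self]

end Units

section MinModulus

variable {𝕜 E F : Type*} [RCLike 𝕜] [NormedAddCommGroup E] [NormedSpace 𝕜 E]
  [NormedAddCommGroup F] [NormedSpace 𝕜 F]

noncomputable def minModulus (T : E →L[𝕜] F) : ℝ :=
  sInf {c : ℝ | ∃ x : E, ‖x‖ = 1 ∧ c = ‖T x‖}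

theorem minModulus_nonneg (T : E →L[𝕜] F) : 0 ≤ minModulus T :=
  Real.sInf_nonneg fun _ ⟨x, _, hc⟩ => hc ▸ norm_nonneg (T x)

theorem minModulus_mul_norm_le (T : E →L[𝕜] F) (x : E) : minModulus T * ‖x‖ ≤ ‖T x‖ := by
  rcases eq_or_ne x 0 with rfl | hx
  · simp
  have hle : minModulus T ≤ ‖T ((‖x‖⁻¹ : 𝕜) • x)‖ :=
    csInf_le ⟨0, fun _ ⟨y, _, hc⟩ => hc ▸ norm_nonneg (T y)⟩ ⟨_, norm_smul_inv_norm hx, rfl⟩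
  rw [map_smul, norm_smul, norm_inv, RCLike.norm_ofReal, abs_norm] at hle
  rwa [le_inv_mul_iff₀ (norm_pos_iff.mpr hx), mul_comm] at hle

theorem le_minModulus [Nontrivial E] {T : E →L[𝕜] F} {c : ℝ} (h : ∀ x, c * ‖x‖ ≤ ‖T x‖) :
    c ≤ minModulus T := by
  obtain ⟨x, hx⟩ := NormedSpace.sphere_nonempty_rclike 𝕜 (E := E) zero_le_one
  refine le_csInf ⟨_, x, mem_sphere_zero_iff_norm.mp hx, rfl⟩ ?_
  rintro _ ⟨y, hy, rfl⟩
  simpa [hy] using h y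

theorem minModulus_units_eq_inv_norm_inv [Nontrivial E] (u : (E →L[𝕜] E)ˣ) :
    minModulus (u : E →L[𝕜] E) = ‖(↑u⁻¹ : E →L[𝕜] E)‖⁻¹ := by
  have hinv : 0 < ‖(↑u⁻¹ : E →L[𝕜] E)‖ := norm_pos_iff.mpr u⁻¹.ne_zero
  refine le_antisymm ?_ (le_minModulus fun x => ?_)
  · rcases (minModulus_nonneg (u : E →L[𝕜] E)).eq_or_lt with h | h
    · rw [← h]; positivity
    rw [le_inv_comm₀ h hinv]
    refine opNorm_le_bound _ (inv_nonneg.mpr h.le) fun y => ?_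
    rw [le_inv_mul_iff₀ h]
    simpa using minModulus_mul_norm_le (u : E →L[𝕜] E) ((↑u⁻¹ : E →L[𝕜] E) y)
  · rw [inv_mul_le_iff₀ hinv]
    simpa using le_opNorm (↑u⁻¹ : E →L[𝕜] E) ((u : E →L[𝕜] E) x)

theorem isUnit_of_minModulus_pos {H : Type*} [NormedAddCommGroup H] [InnerProductSpace 𝕜 H]
    [CompleteSpace H] {T : H →L[𝕜] H} (hT : 0 < minModulus T) (h : (adjoint T).ker = ⊥) :
    IsUnit T := by
  have hbound : ∀ x, ‖x‖ ≤ (minModulus T)⁻¹.toNNReal * ‖T x‖ := fun x => by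
    rw [Real.coe_toNNReal _ (inv_nonneg.mpr hT.le), le_inv_mul_iff₀ hT]
    exact minModulus_mul_norm_le T x
  rw [isUnit_iff_bijective, bijective_iff_dense_range_and_antilipschitz,
    Submodule.topologicalClosure_eq_top_iff, orthogonal_range]
  exact ⟨h, _, antilipschitz_of_bound T hbound⟩

end MinModulus

section

variable {𝕜 E F : Type*} [NontriviallyNormedField 𝕜] [NormedAddCommGroup E] [NormedSpace 𝕜 E]
  [NormedAddCommGroup F] [NormedSpace 𝕜 F]

theorem ContinuousLinearMap.opNorm_sq_le_of_forall {T : E →L[𝕜] F} {C : ℝ} (hC : 0 ≤ C)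
    (h : ∀ x, ‖T x‖ ^ 2 ≤ C * ‖x‖ ^ 2) : ‖T‖ ^ 2 ≤ C := by
  refine (Real.le_sqrt (norm_nonneg T) hC).mp (opNorm_le_bound _ (Real.sqrt_nonneg C) fun x => ?_)
  rw [← Real.sqrt_sq (norm_nonneg (T x)), ← Real.sqrt_sq (norm_nonneg x), ← Real.sqrt_mul hC]
  exact Real.sqrt_le_sqrt (h x)

def Paranormal (A : E →L[𝕜] E) : Prop :=
  ∀ x, ‖A x‖ ^ 2 ≤ ‖A (A x)‖ * ‖x‖

namespace Paranormal

variable {A : E →L[𝕜] E}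

theorem units_inv {u : (E →L[𝕜] E)ˣ} (hu : Paranormal (u : E →L[𝕜] E)) :
    Paranormal (↑u⁻¹ : E →L[𝕜] E) := fun x => by
  simpa [mul_comm ‖x‖] using hu ((↑u⁻¹ : E →L[𝕜] E) ((↑u⁻¹ : E →L[𝕜] E) x))

theorem norm_pow_succ_sq_le (hA : Paranormal A) (n : ℕ) :
    ‖A ^ (n + 1)‖ ^ 2 ≤ ‖A ^ (n + 2)‖ * ‖A ^ n‖ := by
  refine opNorm_sq_le_of_forall (by positivity) fun x => ?_
  calc ‖(A ^ (n + 1)) x‖ ^ 2 ≤ ‖(A ^ (n + 2)) x‖ * ‖(A ^ n) x‖ := by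
        simpa only [pow_succ', mul_apply_eq_comp] using hA ((A ^ n) x)
    _ ≤ (‖A ^ (n + 2)‖ * ‖x‖) * (‖A ^ n‖ * ‖x‖) := by gcongr <;> exact le_opNorm _ _
    _ = ‖A ^ (n + 2)‖ * ‖A ^ n‖ * ‖x‖ ^ 2 := by ring

theorem norm_pow_succ (hA : Paranormal A) (n : ℕ) : ‖A ^ (n + 1)‖ = ‖A‖ ^ (n + 1) := by
  refine le_antisymm (norm_pow_le' A n.succ_pos) ?_
  induction n with
  | zero => simp
  | succ n ih =>
    rcases (norm_nonneg A).eq_or_lt with h | h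
    · simp [← h]
    have hpow : ‖A ^ n‖ ≤ ‖A‖ ^ n := by
      rcases n.eq_zero_or_pos with rfl | hn
      · simpa [one_def] using norm_id_le
      · exact norm_pow_le' A hn
    refine le_of_mul_le_mul_right ?_ (pow_pos h n)
    calc ‖A‖ ^ (n + 1 + 1) * ‖A‖ ^ n = (‖A‖ ^ (n + 1)) ^ 2 := by ring
      _ ≤ ‖A ^ (n + 1)‖ ^ 2 := by gcongr
      _ ≤ ‖A ^ (n + 2)‖ * ‖A ^ n‖ := hA.norm_pow_succ_sq_le n
      _ ≤ ‖A ^ (n + 1 + 1)‖ * ‖A‖ ^ n := by gcongr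

theorem spectralRadius_eq_nnnorm {E : Type*} [NormedAddCommGroup E] [NormedSpace ℂ E]
    [CompleteSpace E] {A : E →L[ℂ] E} (hA : Paranormal A) : spectralRadius ℂ A = ‖A‖₊ := by
  refine tendsto_nhds_unique (spectrum.pow_nnnorm_pow_one_div_tendsto_nhds_spectralRadius A) ?_
  refine tendsto_const_nhds.congr' ?_
  filter_upwards [eventually_ge_atTop 1] with n hn
  obtain ⟨n, rfl⟩ := Nat.exists_eq_add_of_le' hn
  have hnorm : ‖A ^ (n + 1)‖₊ = ‖A‖₊ ^ (n + 1) := NNReal.eq <| by simpa using hA.norm_pow_succ n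
  rw [hnorm, coe_pow, ← rpow_natCast, ← rpow_mul]
  simp [mul_inv_cancel₀ (n.cast_add_one_ne_zero : (n : ℝ) + 1 ≠ 0)]

end Paranormal

end

theorem spectrum.sInf_norm_eq_inv_spectralRadius_inv {A : Type*} [NormedRing A]
    [NormedAlgebra ℂ A] [CompleteSpace A] [Nontrivial A] (u : Aˣ) :
    sInf {c : ℝ | ∃ lam ∈ spectrum ℂ (u : A), c = ‖lam‖} =
      (spectralRadius ℂ (↑u⁻¹ : A)).toReal⁻¹ := by
  obtain ⟨μ, hμ, hμr⟩ := spectrum.exists_nnnorm_eq_spectralRadius (↑u⁻¹ : A)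
  have hμ0 : μ ≠ 0 := fun h => (spectrum.zero_mem_iff ℂ).mp (h ▸ hμ) u⁻¹.isUnit
  have inv_mem {lam : ℂ} (hlam : lam ≠ 0) :
      lam ∈ spectrum ℂ (u : A) ↔ lam⁻¹ ∈ spectrum ℂ (↑u⁻¹ : A) :=
    spectrum.inv_mem_iff (r := Units.mk0 lam hlam)
  rw [← hμr, coe_toReal, coe_nnnorm]
  refine IsLeast.csInf_eq ⟨⟨μ⁻¹, (inv_mem (inv_ne_zero hμ0)).mpr (by rwa [inv_inv]), by
    rw [norm_inv]⟩, ?_⟩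
  rintro _ ⟨lam, hlam, rfl⟩
  have hlam0 : lam ≠ 0 := fun h => (spectrum.zero_mem_iff ℂ).mp (h ▸ hlam) u.isUnit
  have hle : ‖lam⁻¹‖₊ ≤ ‖μ‖₊ := by
    rw [← ENNReal.coe_le_coe, hμr]
    exact le_iSup₂ (f := fun k (_ : k ∈ spectrum ℂ (↑u⁻¹ : A)) => (‖k‖₊ : ℝ≥0∞)) lam⁻¹
      ((inv_mem hlam0).mp hlam)
  rw [← NNReal.coe_le_coe, coe_nnnorm, coe_nnnorm, norm_inv] at hle
  exact (inv_le_comm₀ (norm_pos_iff.mpr hlam0) (norm_pos_iff.mpr hμ0)).mp hle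

theorem stmt_14_general {H : Type*} [NormedAddCommGroup H] [InnerProductSpace ℂ H]
    [CompleteSpace H] [Nontrivial H] (T : H →L[ℂ] H)
    (hT : ∀ (lam : ℂ) (x : H),
      ‖(T - lam • 1) x‖ ^ 2 ≤ ‖((T - lam • 1) ∘L (T - lam • 1)) x‖ * ‖x‖)
    (hker' : LinearMap.ker (ContinuousLinearMap.adjoint T : H →ₗ[ℂ] H) = ⊥) :
    sInf {c : ℝ | ∃ x : H, ‖x‖ = 1 ∧ c = ‖T x‖} =
      sInf {c : ℝ | ∃ lam ∈ spectrum ℂ T, c = ‖lam‖} := by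
  change minModulus T = _
  by_cases hunit : IsUnit T
  · obtain ⟨u, rfl⟩ := hunit
    have hpar : Paranormal (u : H →L[ℂ] H) := fun x => by simpa using hT 0 x
    rw [minModulus_units_eq_inv_norm_inv, spectrum.sInf_norm_eq_inv_spectralRadius_inv,
      hpar.units_inv.spectralRadius_eq_nnnorm, coe_toReal, coe_nnnorm]
  · have hm : minModulus T = 0 := ((minModulus_nonneg T).eq_or_lt.resolve_right
      fun h => hunit (isUnit_of_minModulus_pos h hker')).symm
    have hd : IsLeast {c : ℝ | ∃ lam ∈ spectrum ℂ T, c = ‖lam‖} 0 :=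
      ⟨⟨0, (spectrum.zero_mem_iff ℂ).mpr hunit, norm_zero.symm⟩,
        fun _ ⟨lam, _, hc⟩ => hc ▸ norm_nonneg lam⟩
    rw [hm, hd.csInf_eq]

theorem stmt_14 {H : Type*} [NormedAddCommGroup H] [InnerProductSpace ℂ H]
    [CompleteSpace H] [Nontrivial H] (T : H →L[ℂ] H)
    (hT : ∀ (lam : ℂ) (x : H),
      ‖(T - lam • 1) x‖ ^ 2 ≤ ‖((T - lam • 1) ∘L (T - lam • 1)) x‖ * ‖x‖)
    (hker : LinearMap.ker (T : H →ₗ[ℂ] H) = ⊥)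
    (hker' : LinearMap.ker (ContinuousLinearMap.adjoint T : H →ₗ[ℂ] H) = ⊥) :
    sInf {c : ℝ | ∃ x : H, ‖x‖ = 1 ∧ c = ‖T x‖} =
      sInf {c : ℝ | ∃ lam ∈ spectrum ℂ T, c = ‖lam‖} :=
  stmt_14_general T hT hker'
end

section
/- If T is a bounded paranormal operator such that T² is compact, then T is compact. -/
theorem stmt_16 {H : Type*} [NormedAddCommGroup H] [InnerProductSpace ℂ H]
    [CompleteSpace H] (T : H →L[ℂ] H)
    (hT : ∀ x : H, ‖T x‖ ^ 2 ≤ ‖(T ∘L T) x‖ * ‖x‖)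
    (hcpt : IsCompactOperator ⇑(T ∘L T)) :
    IsCompactOperator ⇑T := by
  have hc2 : IsCompactOperator ⇑((T ∘L T).toLinearMap) := hcpt
  have htb : TotallyBounded (⇑(T ∘L T) '' Metric.closedBall (0:H) 1) :=
    ((hc2.isCompact_closure_image_closedBall 1).totallyBounded).subset subset_closure
  have key : IsCompactOperator ⇑(T.toLinearMap) := by
    rw [isCompactOperator_iff_isCompact_closure_image_closedBall T.toLinearMap one_pos]
    apply TotallyBounded.isCompact_of_isClosed _ isClosed_closure
    apply TotallyBounded.closure
    rw [Metric.totallyBounded_iff]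
    intro ε hε
    obtain ⟨t, hts, htf, hcov⟩ := Metric.finite_approx_of_totallyBounded htb (ε ^ 2 / 2)
      (by positivity)
    -- choose preimages
    choose! pre hpre1 hpre2 using fun y (hy : y ∈ t) => hts hy
    refine ⟨(fun y => T (pre y)) '' t, htf.image _, ?_⟩
    rintro _ ⟨x, hx, rfl⟩
    obtain ⟨y, hy, hxy⟩ := Set.mem_iUnion₂.1 (hcov ⟨x, hx, rfl⟩)
    refine Set.mem_iUnion₂.2 ⟨T (pre y), Set.mem_image_of_mem _ hy, ?_⟩
    have hx1 : ‖x‖ ≤ 1 := mem_closedBall_zero_iff.1 hx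
    have hp1 : ‖pre y‖ ≤ 1 := mem_closedBall_zero_iff.1 (hpre1 y hy)
    have hdist : ‖(T ∘L T) x - (T ∘L T) (pre y)‖ < ε ^ 2 / 2 := by
      have := Metric.mem_ball.1 hxy
      rw [dist_eq_norm] at this
      rw [hpre2 y hy]
      exact this
    have hsq : ‖T x - T (pre y)‖ ^ 2 < ε ^ 2 := by
      have h := hT (x - pre y)
      calc ‖T x - T (pre y)‖ ^ 2
          ≤ ‖T (T x) - T (T (pre y))‖ * ‖x - pre y‖ := by
            simpa [map_sub] using h
        _ ≤ ‖T (T x) - T (T (pre y))‖ * 2 := by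
            gcongr
            calc ‖x - pre y‖ ≤ ‖x‖ + ‖pre y‖ := norm_sub_le _ _
              _ ≤ 2 := by linarith
        _ < ε ^ 2 := by
            have h2 : ‖T (T x) - T (T (pre y))‖ < ε ^ 2 / 2 := by
              simpa using hdist
            nlinarith [norm_nonneg (T (T x) - T (T (pre y)))]
    have : ‖T x - T (pre y)‖ < ε := by
      nlinarith [norm_nonneg (T x - T (pre y))]
    rw [Metric.mem_ball, dist_eq_norm]
    simpa using this
  exact key
end
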